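/- arXiv:1802.04948 — 3 statements merged into one kernel-verified Lean document; each statement's English description precedes it below -/
import Mathlib

section
/- Let G₁ be a simple graph on a finite vertex type V₁ and G₂ a simple graph on a finite vertex type V₂, and suppose both are k-regular for the same k, i.e., every vertex of G₁ and every vertex of G₂ has degree k. Fix a dimension d ∈ ℕ, a function F : (Fin d → ℝ) → (Fin d → ℝ), and an initial state c : Fin d → ℝ, and let x¹ and x² be the deterministic trajectories on G₁ and G₂ respectively with this F and initial state c. Then x¹ t v = x² t w for every t ∈ ℕ, every v ∈ V₁, and every w ∈ V₂. That is, two regular graphs of the same degree are indistinguishable by any deterministic evolution rule of this form. -/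
/-- The deterministic trajectory on a graph: `x 0 v = c`,
`x (t+1) v = F (∑_{u ∈ Γ(v)} x t u)`. -/
def detTraj {V : Type*} [Fintype V] (G : SimpleGraph V) [DecidableRel G.Adj]
    {d : ℕ} (F : (Fin d → ℝ) → (Fin d → ℝ)) (c : Fin d → ℝ) : ℕ → V → (Fin d → ℝ)
  | 0, _ => c
  | t + 1, v => F (∑ u ∈ G.neighborFinset v, detTraj G F c t u)

/-- Two `k`-regular graphs (of the same degree `k`) are indistinguishable by any
deterministic evolution rule of this form: all vertices of both graphs have identical
trajectories. -/
theorem detTraj_eq_of_regular_regular {V₁ V₂ : Type*} [Fintype V₁] [Fintype V₂]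
    (G₁ : SimpleGraph V₁) [DecidableRel G₁.Adj] (G₂ : SimpleGraph V₂) [DecidableRel G₂.Adj]
    (k : ℕ) (h₁ : G₁.IsRegularOfDegree k) (h₂ : G₂.IsRegularOfDegree k)
    {d : ℕ} (F : (Fin d → ℝ) → (Fin d → ℝ)) (c : Fin d → ℝ)
    (t : ℕ) (v : V₁) (w : V₂) :
    detTraj G₁ F c t v = detTraj G₂ F c t w := by
  induction t generalizing v w with
  | zero => rfl
  | succ t ih =>
    show F _ = F _
    have e1 : ∑ u ∈ G₁.neighborFinset v, detTraj G₁ F c t u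
        = (G₁.neighborFinset v).card • detTraj G₂ F c t w :=
      Finset.sum_eq_card_nsmul fun u _ => ih u w
    have e2 : ∑ u ∈ G₂.neighborFinset w, detTraj G₂ F c t u
        = (G₂.neighborFinset w).card • detTraj G₂ F c t w :=
      Finset.sum_eq_card_nsmul fun u _ => ih v u ▸ ih v w
    rw [e1, e2, SimpleGraph.card_neighborFinset_eq_degree,
      SimpleGraph.card_neighborFinset_eq_degree, h₁ v, h₂ w]
end

section
/- The 4-regular graphs R₁ and R₂ on Fin 8 satisfy: (i) there is no graph isomorphism between R₁ and R₂ (indeed their minimum vertex cover sizes are 5 and 6 respectively); and (ii) for every dimension d ∈ ℕ, every function F : (Fin d → ℝ) → (Fin d → ℝ), and every initial state c : Fin d → ℝ, the deterministic trajectories x¹ on R₁ and x² on R₂ (defined by x 0 v = c and x (t+1) v = F (∑_{u ∈ Γ(v)} x t u)) satisfy x¹ t v = x² t w for all t ∈ ℕ, v, w ∈ Fin 8. Consequently, no deterministic evolution rule of this form yields a representation from which the graph can be reconstructed exactly. -/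
/-- The edges of the graph `R₁`. -/
def edgesR1 : List (Fin 8 × Fin 8) :=
  [(0, 3), (0, 5), (0, 6), (0, 7), (1, 2), (1, 4), (1, 6), (1, 7),
   (2, 3), (2, 5), (2, 6), (3, 4), (3, 5), (4, 5), (4, 7), (6, 7)]

/-- The 4-regular graph `R₁` on 8 vertices. -/
def R1 : SimpleGraph (Fin 8) where
  Adj a b := (a, b) ∈ edgesR1 ∨ (b, a) ∈ edgesR1
  symm := ⟨fun _ _ h => h.symm⟩
  loopless := ⟨by intro a; revert a; decide⟩

instance : DecidableRel R1.Adj :=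
  fun a b => inferInstanceAs (Decidable ((a, b) ∈ edgesR1 ∨ (b, a) ∈ edgesR1))

/-- The edges of the graph `R₂`. -/
def edgesR2 : List (Fin 8 × Fin 8) :=
  [(0, 1), (0, 2), (0, 4), (0, 7), (1, 4), (1, 5), (1, 6), (2, 3),
   (2, 4), (2, 7), (3, 5), (3, 6), (3, 7), (4, 6), (5, 6), (5, 7)]

/-- The 4-regular graph `R₂` on 8 vertices. -/
def R2 : SimpleGraph (Fin 8) where
  Adj a b := (a, b) ∈ edgesR2 ∨ (b, a) ∈ edgesR2
  symm := ⟨fun _ _ h => h.symm⟩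
  loopless := ⟨by intro a; revert a; decide⟩

instance : DecidableRel R2.Adj :=
  fun a b => inferInstanceAs (Decidable ((a, b) ∈ edgesR2 ∨ (b, a) ∈ edgesR2))

/-- A set `S` of vertices is a vertex cover of `G` if every edge of `G` has at least one
endpoint in `S`. -/
def IsVertexCover {V : Type*} (G : SimpleGraph V) (S : Finset V) : Prop :=
  ∀ ⦃v w : V⦄, G.Adj v w → v ∈ S ∨ w ∈ S

/-!
On a `k`-regular graph every vertex starts in the same state, so by induction all vertices
stay in the same state, which evolves by `a ↦ F (k • a)`: the trajectory only sees the
degree. Both `R₁` and `R₂` are 4-regular, hence indistinguishable by any such rule. They are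
not isomorphic because an isomorphism carries vertex covers to vertex covers of the same
size, while `R₁` has a cover with 5 vertices and `R₂` has none with fewer than 6.
-/

theorem detTraj_of_isRegularOfDegree {V : Type*} [Fintype V] {G : SimpleGraph V}
    [DecidableRel G.Adj] {k : ℕ} (hG : G.IsRegularOfDegree k) {d : ℕ}
    (F : (Fin d → ℝ) → (Fin d → ℝ)) (c : Fin d → ℝ) (t : ℕ) (v : V) :
    detTraj G F c t v = (fun a => F (k • a))^[t] c := by
  induction t generalizing v with
  | zero => rfl
  | succ t ih =>
    rw [Function.iterate_succ_apply', detTraj, Finset.sum_congr rfl fun u _ => ih u,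
      Finset.sum_const, G.card_neighborFinset_eq_degree, hG.degree_eq]

theorem IsVertexCover.map {V W : Type*} [DecidableEq W] {G : SimpleGraph V}
    {H : SimpleGraph W} (e : G ≃g H) {S : Finset V} (hS : IsVertexCover G S) :
    IsVertexCover H (S.image e) := by
  intro v w hvw
  rcases hS (e.symm.map_adj_iff.mpr hvw) with hv | hw
  · exact Or.inl (Finset.mem_image.mpr ⟨_, hv, e.apply_symm_apply v⟩)
  · exact Or.inr (Finset.mem_image.mpr ⟨_, hw, e.apply_symm_apply w⟩)

theorem not_nonempty_iso_of_isVertexCover_card_lt {V W : Type*} [DecidableEq W]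
    {G : SimpleGraph V} {H : SimpleGraph W} {S : Finset V} {n : ℕ}
    (hS : IsVertexCover G S) (hcard : S.card < n)
    (hH : ∀ T : Finset W, IsVertexCover H T → n ≤ T.card) : ¬ Nonempty (G ≃g H) := by
  rintro ⟨e⟩
  have hT := hH _ (hS.map e)
  rw [Finset.card_image_of_injective _ e.injective] at hT
  omega

theorem R1_isRegularOfDegree : R1.IsRegularOfDegree 4 := by
  unfold SimpleGraph.IsRegularOfDegree; decide

theorem R2_isRegularOfDegree : R2.IsRegularOfDegree 4 := by
  unfold SimpleGraph.IsRegularOfDegree; decide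

theorem isVertexCover_R1 : IsVertexCover R1 {1, 3, 5, 6, 7} := by
  unfold IsVertexCover; decide

theorem isVertexCover_R2 : IsVertexCover R2 {1, 2, 4, 5, 6, 7} := by
  unfold IsVertexCover; decide

set_option maxRecDepth 10000 in
theorem five_le_card_of_isVertexCover_R1 :
    ∀ S : Finset (Fin 8), IsVertexCover R1 S → 5 ≤ S.card := by
  unfold IsVertexCover; decide

set_option maxRecDepth 10000 in
theorem six_le_card_of_isVertexCover_R2 :
    ∀ S : Finset (Fin 8), IsVertexCover R2 S → 6 ≤ S.card := by
  unfold IsVertexCover; decide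

/-- `R₁` and `R₂` are non-isomorphic (their minimum vertex cover sizes are 5 and 6
respectively), yet every deterministic evolution rule produces identical trajectories on
all vertices of both graphs; hence no deterministic rule of this form yields a
representation from which the graph can be reconstructed exactly. -/
theorem R1_R2_not_isomorphic_but_detTraj_equal :
    (¬ Nonempty (R1 ≃g R2)) ∧
    ((∃ S : Finset (Fin 8), IsVertexCover R1 S ∧ S.card = 5) ∧
      (∀ S : Finset (Fin 8), IsVertexCover R1 S → 5 ≤ S.card)) ∧
    ((∃ S : Finset (Fin 8), IsVertexCover R2 S ∧ S.card = 6) ∧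
      (∀ S : Finset (Fin 8), IsVertexCover R2 S → 6 ≤ S.card)) ∧
    (∀ (d : ℕ) (F : (Fin d → ℝ) → (Fin d → ℝ)) (c : Fin d → ℝ) (t : ℕ) (v w : Fin 8),
      detTraj R1 F c t v = detTraj R2 F c t w) := by
  refine ⟨not_nonempty_iso_of_isVertexCover_card_lt isVertexCover_R1 (by decide)
      six_le_card_of_isVertexCover_R2,
    ⟨⟨_, isVertexCover_R1, rfl⟩, five_le_card_of_isVertexCover_R1⟩,
    ⟨⟨_, isVertexCover_R2, rfl⟩, six_le_card_of_isVertexCover_R2⟩, ?_⟩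
  intro d F c t v w
  rw [detTraj_of_isRegularOfDegree R1_isRegularOfDegree,
    detTraj_of_isRegularOfDegree R2_isRegularOfDegree]
end

section
/- There do not exist functions r : SimpleGraph (Fin 7 × Fin 3) → (Fin 7 × Fin 3) → ℝ and g : Multiset ℝ → ℕ with the following two properties: (invariance) for all simple graphs H₁, H₂ on Fin 7 × Fin 3 and all vertices v₁, v₂, if there is a graph isomorphism between the subgraph of H₁ induced on the 2-ball around v₁ in H₁ and the subgraph of H₂ induced on the 2-ball around v₂ in H₂ which maps v₁ to v₂, then r H₁ v₁ = r H₂ v₂; and (correctness) for every simple graph H on Fin 7 × Fin 3, applying g to the multiset { r H v : v ∈ Fin 7 × Fin 3 } (with multiplicity) yields the minimum size of a vertex cover of H. That is, no 2-local-gather algorithm computes the minimum vertex cover size exactly on all 21-vertex graphs. -/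
/-- The `k`-ball around a vertex `v`: vertices reachable from `v` at graph distance at
most `k`. -/
def ball {V : Type*} (G : SimpleGraph V) (v : V) (k : ℕ) : Set V :=
  {u | G.Reachable v u ∧ G.dist v u ≤ k}

lemma self_mem_ball {V : Type*} (G : SimpleGraph V) (v : V) (k : ℕ) : v ∈ ball G v k :=
  ⟨SimpleGraph.Reachable.refl v, by simp [SimpleGraph.dist_self]⟩

/-- The minimum size of a vertex cover of a graph on a finite vertex type. -/
noncomputable def coverNumber {V : Type*} [Fintype V] (G : SimpleGraph V) : ℕ :=
  sInf {n | ∃ S : Finset V, IsVertexCover G S ∧ S.card = n}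

/-! Both the 21-cycle and three disjoint 7-cycles are circulant graphs on `Fin 7 × Fin 3` with a
single jump: `(1, 1)`, of order 21, and `(1, 0)`, of order 7. As both orders exceed 5, the
2-ball around any vertex in either graph is a path on five vertices centred at that vertex, so a
2-local representation takes the same value at each vertex in both graphs and the gather step
returns the same number for both. But covering an odd cycle `C_n` takes `(n + 1) / 2`
vertices, since each cover vertex meets only two of the `n` edges: the 21-cycle has cover number
11, the three 7-cycles have 12. -/

open Finset
open SimpleGraph (circulantGraph circulantGraph_adj)

section Ball

variable {V : Type*} {G : SimpleGraph V} {u v : V}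

lemma mem_ball_iff_exists_walk {k : ℕ} : u ∈ ball G v k ↔ ∃ p : G.Walk v u, p.length ≤ k :=
  ⟨fun ⟨hr, hd⟩ => let ⟨p, hp⟩ := hr.exists_walk_length_eq_dist; ⟨p, hp ▸ hd⟩,
    fun ⟨p, hp⟩ => ⟨p.reachable, (SimpleGraph.dist_le p).trans hp⟩⟩

lemma mem_ball_two_iff : u ∈ ball G v 2 ↔ u = v ∨ G.Adj v u ∨ ∃ w, G.Adj v w ∧ G.Adj w u := by
  rw [mem_ball_iff_exists_walk]
  constructor
  · rintro ⟨p, hp⟩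
    match p, hp with
    | .nil, _ => exact .inl rfl
    | .cons h .nil, _ => exact .inr (.inl h)
    | .cons h (.cons h' .nil), _ => exact .inr (.inr ⟨_, h, h'⟩)
    | .cons _ (.cons _ (.cons _ _)), hp => simp at hp
  · rintro (rfl | h | ⟨w, h, h'⟩)
    exacts [⟨.nil, by simp⟩, ⟨h.toWalk, by simp⟩, ⟨.cons h h'.toWalk, by simp⟩]

end Ball

section AddOrder

variable {A : Type*} [AddGroup A] {g : A}

lemma ne_zero_of_one_lt_addOrderOf (hg : 1 < addOrderOf g) : g ≠ 0 := by
  rintro rfl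
  simp at hg

lemma zsmul_eq_zero_iff_of_abs_lt {m : ℤ} (hm : |m| < addOrderOf g) : m • g = 0 ↔ m = 0 :=
  ⟨fun h => Int.eq_zero_of_abs_lt_dvd (addOrderOf_dvd_iff_zsmul_eq_zero.mpr h) hm,
    fun h => h ▸ zero_zsmul g⟩

lemma Fin.addOrderOf_one (n : ℕ) : addOrderOf (1 : Fin (n + 1)) = n + 1 :=
  ZMod.addOrderOf_one (n + 1)

end AddOrder

section Circulant

variable {A B : Type*} [AddCommGroup A] [AddCommGroup B] {g : A} {h : B}

lemma circulantGraph_singleton_adj (hg : g ≠ 0) {u w : A} :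
    (circulantGraph {g}).Adj u w ↔ w = u + g ∨ w = u - g := by
  rw [circulantGraph_adj, Set.mem_singleton_iff, Set.mem_singleton_iff]
  constructor
  · rintro ⟨-, h | h⟩
    · exact .inr (by rw [← h]; abel)
    · exact .inl (by rw [← h]; abel)
  · rintro (rfl | rfl)
    · exact ⟨fun h => hg (add_eq_left.mp h.symm), .inr (by abel)⟩
    · exact ⟨fun h => hg (sub_eq_self.mp h.symm), .inl (by abel)⟩

lemma circulantGraph_prod_adj_mk {a a' : A} (b : B) :
    (circulantGraph {(g, (0 : B))}).Adj (a, b) (a', b) ↔ (circulantGraph {g}).Adj a a' := by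
  simp [Prod.ext_iff]

lemma isRegularOfDegree_circulantGraph_singleton [Fintype A] [DecidableEq A]
    (hg : 2 < addOrderOf g) : (circulantGraph {g}).IsRegularOfDegree 2 := by
  have h2g : g + g ≠ 0 := by
    rw [← two_zsmul, ne_eq, zsmul_eq_zero_iff_of_abs_lt (by simpa using hg)]
    norm_num
  intro v
  have hN : (circulantGraph {g}).neighborFinset v = {v + g, v - g} := by
    ext u
    simp only [SimpleGraph.mem_neighborFinset,
      circulantGraph_singleton_adj (ne_zero_of_one_lt_addOrderOf (g := g) (by omega)), mem_insert,
      mem_singleton]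
  rw [← SimpleGraph.card_neighborFinset_eq_degree, hN, card_pair]
  intro heq
  apply h2g
  calc g + g = (v + g) - (v - g) := by abel
    _ = 0 := by rw [heq, sub_self]

lemma mem_ball_two_circulantGraph_singleton (hg : g ≠ 0) {u v : A} :
    u ∈ ball (circulantGraph {g}) v 2 ↔ ∃ k : ℤ, |k| ≤ 2 ∧ v + k • g = u := by
  simp only [mem_ball_two_iff, circulantGraph_singleton_adj hg]
  constructor
  · rintro (rfl | (rfl | rfl) | ⟨w, rfl | rfl, rfl | rfl⟩)
    · exact ⟨0, by simp⟩
    · exact ⟨1, by simp⟩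
    · exact ⟨-1, by simp [sub_eq_add_neg]⟩
    · exact ⟨2, by norm_num [two_zsmul, add_assoc]⟩
    · exact ⟨0, by simp⟩
    · exact ⟨0, by simp⟩
    · exact ⟨-2, by norm_num [two_zsmul, sub_eq_add_neg, add_assoc]⟩
  · rintro ⟨k, hk, rfl⟩
    obtain ⟨hk₁, hk₂⟩ := abs_le.mp hk
    interval_cases k
    · exact .inr (.inr ⟨v - g, .inr rfl, .inr (by simp [two_zsmul]; abel)⟩)
    · exact .inr (.inl (.inr (by simp [sub_eq_add_neg])))
    · exact .inl (by simp)
    · exact .inr (.inl (.inl (by simp)))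
    · exact .inr (.inr ⟨v + g, .inl rfl, .inl (by simp [two_zsmul, add_assoc])⟩)

/-- Every difference of indices compared here has absolute value at most `5`, below the order
of `g`, so the ball sees no wrap-around. -/
lemma circulantGraph_singleton_adj_add_zsmul (hg : 5 < addOrderOf g) (v : A) {i j : ℤ}
    (hi : |i| ≤ 2) (hj : |j| ≤ 2) :
    (circulantGraph {g}).Adj (v + i • g) (v + j • g) ↔ j = i + 1 ∨ j = i - 1 := by
  have hsmall : ∀ m : ℤ, |m| ≤ 5 → (m • g = 0 ↔ m = 0) := fun m hm =>
    zsmul_eq_zero_iff_of_abs_lt (hm.trans_lt (by exact_mod_cast hg))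
  have e₁ : v + j • g - (v + i • g + g) = (j - i - 1) • g := by module
  have e₂ : v + j • g - (v + i • g - g) = (j - i + 1) • g := by module
  rw [circulantGraph_singleton_adj (ne_zero_of_one_lt_addOrderOf (g := g) (by omega)),
    ← sub_eq_zero, e₁, ← sub_eq_zero (a := v + j • g), e₂]
  obtain ⟨hi₁, hi₂⟩ := abs_le.mp hi
  obtain ⟨hj₁, hj₂⟩ := abs_le.mp hj
  rw [hsmall _ (abs_le.mpr ⟨by omega, by omega⟩), hsmall _ (abs_le.mpr ⟨by omega, by omega⟩)]
  omega

noncomputable def circulantBallEquiv (hg : 5 < addOrderOf g) (v : A) :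
    {k : ℤ // |k| ≤ 2} ≃ ball (circulantGraph {g}) v 2 :=
  have hg₀ := ne_zero_of_one_lt_addOrderOf (by omega : 1 < addOrderOf g)
  Equiv.ofBijective
    (fun k => ⟨v + k.1 • g, (mem_ball_two_circulantGraph_singleton hg₀).mpr ⟨k, k.2, rfl⟩⟩)
    ⟨fun i j hij => by
      have hij : (i.1 - j.1) • g = 0 := by
        rw [sub_zsmul, add_left_cancel (congrArg Subtype.val hij), add_neg_cancel]
      obtain ⟨hi₁, hi₂⟩ := abs_le.mp i.2
      obtain ⟨hj₁, hj₂⟩ := abs_le.mp j.2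
      have hlt : |i.1 - j.1| < addOrderOf g :=
        (abs_le.mpr ⟨by omega, by omega⟩ : |i.1 - j.1| ≤ 5).trans_lt (by exact_mod_cast hg)
      exact Subtype.ext (sub_eq_zero.mp ((zsmul_eq_zero_iff_of_abs_lt hlt).mp hij)),
    fun u => by
      obtain ⟨k, hk, hu⟩ := (mem_ball_two_circulantGraph_singleton hg₀).mp u.2
      exact ⟨⟨k, hk⟩, Subtype.ext hu⟩⟩

@[simp]
lemma coe_circulantBallEquiv (hg : 5 < addOrderOf g) (v : A) (k : {k : ℤ // |k| ≤ 2}) :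
    (circulantBallEquiv hg v k : A) = v + k.1 • g :=
  rfl

lemma circulantBallEquiv_zero (hg : 5 < addOrderOf g) (v : A) :
    circulantBallEquiv hg v ⟨0, by simp⟩ = ⟨v, self_mem_ball _ v 2⟩ :=
  Subtype.ext (by simp)

noncomputable def circulantBallIso (hg : 5 < addOrderOf g) (hh : 5 < addOrderOf h) (v : A)
    (w : B) :
    (circulantGraph {g}).induce (ball (circulantGraph {g}) v 2) ≃g
      (circulantGraph {h}).induce (ball (circulantGraph {h}) w 2) where
  toEquiv := (circulantBallEquiv hg v).symm.trans (circulantBallEquiv hh w)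
  map_rel_iff' {x y} := by
    obtain ⟨i, rfl⟩ := (circulantBallEquiv hg v).surjective x
    obtain ⟨j, rfl⟩ := (circulantBallEquiv hg v).surjective y
    simp only [Equiv.trans_apply, Equiv.symm_apply_apply, SimpleGraph.comap_adj,
      Function.Embedding.subtype_apply, coe_circulantBallEquiv,
      circulantGraph_singleton_adj_add_zsmul hg _ i.2 j.2,
      circulantGraph_singleton_adj_add_zsmul hh _ i.2 j.2]

lemma circulantBallIso_center (hg : 5 < addOrderOf g) (hh : 5 < addOrderOf h) (v : A) (w : B) :
    circulantBallIso hg hh v w ⟨v, self_mem_ball _ v 2⟩ = ⟨w, self_mem_ball _ w 2⟩ := by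
  rw [← circulantBallEquiv_zero hg, ← circulantBallEquiv_zero hh]
  exact congrArg (circulantBallEquiv hh w) ((circulantBallEquiv hg v).symm_apply_apply _)

end Circulant

section VertexCover

variable {V : Type*} [Fintype V] {G : SimpleGraph V}

lemma coverNumber_le {S : Finset V} (hS : IsVertexCover G S) : coverNumber G ≤ #S :=
  Nat.sInf_le ⟨S, hS, rfl⟩

lemma le_coverNumber {n : ℕ} (h : ∀ S, IsVertexCover G S → n ≤ #S) : n ≤ coverNumber G :=
  le_csInf ⟨_, univ, fun v _ _ => .inl (mem_univ v), rfl⟩ (by rintro _ ⟨S, hS, rfl⟩; exact h S hS)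

lemma IsVertexCover.card_edgeFinset_le_sum_degree [DecidableEq V] [DecidableRel G.Adj]
    {S : Finset V} (hS : IsVertexCover G S) : #G.edgeFinset ≤ ∑ v ∈ S, G.degree v := by
  have hsub : G.edgeFinset ⊆ S.biUnion fun v => G.incidenceFinset v := by
    intro e he
    induction e with
    | h a b =>
      rw [SimpleGraph.mem_edgeFinset, SimpleGraph.mem_edgeSet] at he
      rw [mem_biUnion]
      rcases hS he with ha | hb
      · exact ⟨a, ha, (G.mem_incidenceFinset _ _).mpr (G.mk'_mem_incidenceSet_left_iff.mpr he)⟩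
      · exact ⟨b, hb, (G.mem_incidenceFinset _ _).mpr (G.mk'_mem_incidenceSet_right_iff.mpr he)⟩
  calc #G.edgeFinset ≤ #(S.biUnion fun v => G.incidenceFinset v) := card_le_card hsub
    _ ≤ ∑ v ∈ S, #(G.incidenceFinset v) := card_biUnion_le
    _ = ∑ v ∈ S, G.degree v := by simp only [SimpleGraph.card_incidenceFinset_eq_degree]

lemma IsVertexCover.card_le_two_mul_card [DecidableRel G.Adj] {S : Finset V}
    (hS : IsVertexCover G S) {d : ℕ} (hG : G.IsRegularOfDegree d) (hd : 0 < d) :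
    Fintype.card V ≤ 2 * #S := by
  classical
  have hcount := hS.card_edgeFinset_le_sum_degree
  have hsum := G.sum_degrees_eq_twice_card_edges
  simp only [hG.degree_eq, sum_const, card_univ, smul_eq_mul] at hcount hsum
  exact le_of_mul_le_mul_left (by linarith) hd

lemma card_mul_coverNumber_le_coverNumber {B : Type*} [Fintype B] {H : SimpleGraph (V × B)}
    (hGH : ∀ b a a', G.Adj a a' → H.Adj (a, b) (a', b)) :
    Fintype.card B * coverNumber G ≤ coverNumber H := by
  classical
  refine le_coverNumber fun S hS => ?_
  let fibre (b : B) : Finset V := S.preimage (·, b) (Prod.mk_left_injective b).injOn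
  have hfibre : ∀ b, IsVertexCover G (fibre b) := fun b a a' hadj => by
    simpa [fibre] using hS (hGH b a a' hadj)
  calc Fintype.card B * coverNumber G = ∑ b : B, coverNumber G := by simp
    _ ≤ ∑ b : B, #(fibre b) := sum_le_sum fun b _ => coverNumber_le (hfibre b)
    _ = #S := by
      rw [card_eq_sum_card_fiberwise (f := Prod.snd) (t := univ) fun _ _ => mem_univ _]
      refine sum_congr rfl fun b _ => ?_
      rw [card_preimage]
      congr 1
      ext x
      simp only [mem_filter, Set.mem_range, Prod.ext_iff]
      grind

end VertexCover

lemma addOrderOf_one_one : addOrderOf ((1, 1) : Fin 7 × Fin 3) = 21 := by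
  rw [Prod.addOrderOf]
  simp only [Fin.addOrderOf_one]
  rfl

lemma addOrderOf_one_zero : addOrderOf ((1, 0) : Fin 7 × Fin 3) = 7 := by
  rw [Prod.addOrderOf]
  simp only [Fin.addOrderOf_one, addOrderOf_zero]
  rfl

lemma coverNumber_circulantGraph_one_fin_seven :
    coverNumber (circulantGraph {(1 : Fin 7)}) = 4 := by
  have hS : IsVertexCover (circulantGraph {(1 : Fin 7)}) {1, 3, 5, 6} := by
    unfold IsVertexCover; decide
  have hreg : (circulantGraph {(1 : Fin 7)}).IsRegularOfDegree 2 :=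
    isRegularOfDegree_circulantGraph_singleton (by simp [Fin.addOrderOf_one])
  refine ((coverNumber_le hS).trans_eq (by decide)).antisymm (le_coverNumber fun T hT => ?_)
  have := hT.card_le_two_mul_card hreg two_pos
  rw [Fintype.card_fin] at this
  omega

lemma coverNumber_circulantGraph_one_zero :
    coverNumber (circulantGraph {((1, 0) : Fin 7 × Fin 3)}) = 12 := by
  have hS : IsVertexCover (circulantGraph {((1, 0) : Fin 7 × Fin 3)}) ({1, 3, 5, 6} ×ˢ univ) := by
    unfold IsVertexCover; decide
  refine ((coverNumber_le hS).trans_eq (by decide)).antisymm ?_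
  have := card_mul_coverNumber_le_coverNumber (G := circulantGraph {(1 : Fin 7)})
    (H := circulantGraph {((1, 0) : Fin 7 × Fin 3)}) fun b _ _ => (circulantGraph_prod_adj_mk b).mpr
  rwa [coverNumber_circulantGraph_one_fin_seven, Fintype.card_fin] at this

lemma coverNumber_circulantGraph_one_one :
    coverNumber (circulantGraph {((1, 1) : Fin 7 × Fin 3)}) = 11 := by
  -- the odd positions `k • (1, 1)` of the 21-cycle, plus position 20 for the edge from 20 to 0
  have hS : IsVertexCover (circulantGraph {((1, 1) : Fin 7 × Fin 3)})
      (((range 21).filter fun k => Odd k ∨ k = 20).image (· • ((1, 1) : Fin 7 × Fin 3))) := by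
    unfold IsVertexCover; decide
  have hreg : (circulantGraph {((1, 1) : Fin 7 × Fin 3)}).IsRegularOfDegree 2 :=
    isRegularOfDegree_circulantGraph_singleton (by rw [addOrderOf_one_one]; norm_num)
  refine ((coverNumber_le hS).trans_eq (by decide)).antisymm (le_coverNumber fun T hT => ?_)
  have := hT.card_le_two_mul_card hreg two_pos
  simp only [Fintype.card_prod, Fintype.card_fin] at this
  omega

/-- No 2-local-gather algorithm computes the minimum vertex cover size exactly on all
graphs on 21 vertices: there is no vertex representation `r` depending only on the
isomorphism type of the 2-hop neighborhood of a vertex, together with a gather function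
`g` of the multiset of vertex representations, that outputs the minimum vertex cover size
of every graph. -/
theorem no_two_local_gather_computes_minimum_vertex_cover :
    ¬ ∃ (r : SimpleGraph (Fin 7 × Fin 3) → (Fin 7 × Fin 3) → ℝ) (g : Multiset ℝ → ℕ),
      (∀ (H₁ H₂ : SimpleGraph (Fin 7 × Fin 3)) (v₁ v₂ : Fin 7 × Fin 3),
        (∃ e : H₁.induce (ball H₁ v₁ 2) ≃g H₂.induce (ball H₂ v₂ 2),
          e ⟨v₁, self_mem_ball H₁ v₁ 2⟩ = ⟨v₂, self_mem_ball H₂ v₂ 2⟩) →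
        r H₁ v₁ = r H₂ v₂) ∧
      (∀ H : SimpleGraph (Fin 7 × Fin 3),
        g (Multiset.map (r H) (Finset.univ : Finset (Fin 7 × Fin 3)).val) = coverNumber H) := by
  rintro ⟨r, g, hinv, hcor⟩
  have h₂₁ : 5 < addOrderOf ((1, 1) : Fin 7 × Fin 3) := by rw [addOrderOf_one_one]; norm_num
  have h₇ : 5 < addOrderOf ((1, 0) : Fin 7 × Fin 3) := by rw [addOrderOf_one_zero]; norm_num
  have hr : r (circulantGraph {(1, 1)}) = r (circulantGraph {(1, 0)}) := funext fun v =>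
    hinv _ _ v v ⟨circulantBallIso h₂₁ h₇ v v, circulantBallIso_center h₂₁ h₇ v v⟩
  have hcover := (hcor (circulantGraph {(1, 1)})).symm.trans (hr ▸ hcor (circulantGraph {(1, 0)}))
  rw [coverNumber_circulantGraph_one_one, coverNumber_circulantGraph_one_zero] at hcover
  omega
end
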